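/- arXiv:1705.07277 — 2 statements merged into one kernel-verified Lean document; each statement's English description precedes it below -/
import Mathlib

section
/- Let β > 1. If w ∈ Σ_β^n and w′ ∈ Σ_β^m are both full admissible words, then the concatenation ww′ is a full admissible word of length n + m. -/
noncomputable def Tb (β x : ℝ) : ℝ := β * x - ⌊β * x⌋

/-- The (i+1)-th digit of the β-expansion of x (0-indexed). -/
noncomputable def dig (β x : ℝ) (i : ℕ) : ℕ := (⌊β * (Tb β)^[i] x⌋).toNat

/-- w is an admissible word for base β. -/
def Adm (β : ℝ) (w : List ℕ) : Prop :=
  ∃ x, x ∈ Set.Ico (0:ℝ) 1 ∧ ∀ i (h : i < w.length), w[i] = dig β x i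

/-- u is an admissible digit sequence for base β. -/
def AdmSeq (β : ℝ) (u : ℕ → ℕ) : Prop :=
  ∃ x, x ∈ Set.Ico (0:ℝ) 1 ∧ ∀ i, u i = dig β x i

/-- The cylinder I(w) ⊆ [0,1). -/
def cyl (β : ℝ) (w : List ℕ) : Set ℝ :=
  {x | x ∈ Set.Ico (0:ℝ) 1 ∧ ∀ i (h : i < w.length), w[i] = dig β x i}

/-- w is a full word: T_β^{|w|} maps I(w) onto [0,1). -/
def Full (β : ℝ) (w : List ℕ) : Prop :=
  (Tb β)^[w.length] '' cyl β w = Set.Ico 0 1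

/-- The β-expansion of 1 is finite with length M. -/
def FiniteLen (β : ℝ) (M : ℕ) : Prop :=
  0 < M ∧ dig β 1 (M-1) ≠ 0 ∧ ∀ j, M ≤ j → dig β 1 j = 0

open Classical in
/-- The (i+1)-th digit of the modified β-expansion ε*(1,β) (0-indexed). -/
noncomputable def modExp (β : ℝ) (i : ℕ) : ℕ :=
  if h : ∃ M, FiniteLen β M then
    (if (i+1) % (Nat.find h) = 0 then dig β 1 (Nat.find h - 1) - 1
     else dig β 1 (i % Nat.find h))
  else dig β 1 i

/-- View a finite word as the sequence w0^∞. -/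
def wordSeq (w : List ℕ) (i : ℕ) : ℕ := w.getD i 0

/-- Strict lexicographic order on sequences. -/
def seqLt (u v : ℕ → ℕ) : Prop := ∃ k, (∀ i, i < k → u i = v i) ∧ u k < v k

/-- Strict lexicographic order on finite words (identified with w0^∞). -/
def wlt (u v : List ℕ) : Prop := seqLt (wordSeq u) (wordSeq v)

/-- Concatenation of a finite word with a sequence. -/
def catSeq (w : List ℕ) (u : ℕ → ℕ) (i : ℕ) : ℕ :=
  if h : i < w.length then w[i] else u (i - w.length)

open Classical in
/-- The largest position k ≤ s with ε_k ≠ 0 (greedy step). -/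
noncomputable def greedyStep (β : ℝ) (s : ℕ) : ℕ :=
  Nat.findGreatest (fun k => 1 ≤ k ∧ dig β 1 (k-1) ≠ 0) s

/-- τ_β(s): number of terms in the greedy representation of s by nonzero positions. -/
noncomputable def tau (β : ℝ) : ℕ → ℕ
  | 0 => 0
  | s + 1 => tau β (s - (greedyStep β (s+1) - 1)) + 1
decreasing_by omega

open Classical in
/-- r_s(β): maximal length of a string of 0's in ε₁*⋯ε_s*. -/
noncomputable def rrun (β : ℝ) (s : ℕ) : ℕ :=
  Nat.findGreatest (fun k => 1 ≤ k ∧ ∃ i, i + k ≤ s ∧ ∀ t, t < k → modExp β (i + t) = 0) s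

/-- v is the immediate successor of u in the lexicographic order on Σ_β^n. -/
def SuccIn (β : ℝ) (n : ℕ) (u v : List ℕ) : Prop :=
  u.length = n ∧ v.length = n ∧ Adm β u ∧ Adm β v ∧ wlt u v ∧
  ¬ ∃ z : List ℕ, z.length = n ∧ Adm β z ∧ wlt u z ∧ wlt z v

/-- There is a run of l consecutive non-full words in Σ_β^n. -/
def NonFullRun (β : ℝ) (n l : ℕ) : Prop :=
  ∃ f : ℕ → List ℕ,
    (∀ j, j < l → (f j).length = n ∧ Adm β (f j) ∧ ¬ Full β (f j)) ∧
    (∀ j, j + 1 < l → SuccIn β n (f j) (f (j+1)))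

/-- There is a maximal run of l consecutive non-full words in Σ_β^n. -/
def MaxNonFullRun (β : ℝ) (n l : ℕ) : Prop :=
  0 < l ∧ ∃ f : ℕ → List ℕ,
    (∀ j, j < l → (f j).length = n ∧ Adm β (f j) ∧ ¬ Full β (f j)) ∧
    (∀ j, j + 1 < l → SuccIn β n (f j) (f (j+1))) ∧
    (∀ u, SuccIn β n u (f 0) → Full β u) ∧
    (∀ u, SuccIn β n (f (l-1)) u → Full β u)

/-- There is a maximal run of l consecutive full words in Σ_β^n. -/
def MaxFullRun (β : ℝ) (n l : ℕ) : Prop :=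
  0 < l ∧ ∃ f : ℕ → List ℕ,
    (∀ j, j < l → (f j).length = n ∧ Adm β (f j) ∧ Full β (f j)) ∧
    (∀ j, j + 1 < l → SuccIn β n (f j) (f (j+1))) ∧
    (∀ u, SuccIn β n u (f 0) → ¬ Full β u) ∧
    (∀ u, SuccIn β n (f (l-1)) u → ¬ Full β u)

/-- The canonical decomposition of an admissible word, as in the structure theorem:
p.1 is the list of block lengths k₁,…,k_p and p.2 is the final length l. -/
def Decomp (β : ℝ) (w : List ℕ) (p : List ℕ × ℕ) : Prop :=
  1 ≤ p.2 ∧ (∀ k ∈ p.1, 1 ≤ k) ∧ p.1.sum + p.2 = w.length ∧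
  (∀ j, j < p.1.length →
    (∀ t, t < p.1.getD j 0 - 1 → w.getD ((p.1.take j).sum + t) 0 = dig β 1 t) ∧
    w.getD ((p.1.take j).sum + (p.1.getD j 0 - 1)) 0 < dig β 1 (p.1.getD j 0 - 1)) ∧
  (∀ t, t < p.2 - 1 → w.getD (p.1.sum + t) 0 = dig β 1 t) ∧
  w.getD (p.1.sum + (p.2 - 1)) 0 ≤ dig β 1 (p.2 - 1)

/-!
The cylinder of `w ++ w'` is the part of the cylinder of `w` that `T_β^{|w|}` sends into the
cylinder of `w'`. As `T_β^{|w|}` maps the cylinder of `w` onto `[0,1)`, the image of the cylinder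
of `w ++ w'` under `T_β^{|w| + |w'|}` is the image of the cylinder of `w'` under `T_β^{|w'|}`,
which is `[0,1)` again. A full word has a nonempty cylinder, hence is admissible.
-/

lemma Tb_mem_Ico (β x : ℝ) : Tb β x ∈ Set.Ico (0 : ℝ) 1 :=
  ⟨Int.fract_nonneg (β * x), Int.fract_lt_one (β * x)⟩

lemma iterate_Tb_mem_Ico (β : ℝ) {x : ℝ} (hx : x ∈ Set.Ico (0 : ℝ) 1) :
    ∀ n : ℕ, (Tb β)^[n] x ∈ Set.Ico (0 : ℝ) 1
  | 0 => hx
  | n + 1 => by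
    rw [Function.iterate_succ_apply']
    exact Tb_mem_Ico β _

lemma dig_add (β x : ℝ) (n i : ℕ) : dig β x (n + i) = dig β ((Tb β)^[n] x) i := by
  rw [dig, dig, Nat.add_comm, Function.iterate_add_apply]

lemma cyl_subset_Ico (β : ℝ) (w : List ℕ) : cyl β w ⊆ Set.Ico 0 1 :=
  fun _ hx => hx.1

lemma cyl_append (β : ℝ) (w w' : List ℕ) :
    cyl β (w ++ w') = cyl β w ∩ (Tb β)^[w.length] ⁻¹' cyl β w' := by
  ext x
  simp only [cyl, Set.mem_inter_iff, Set.mem_preimage, Set.mem_ofPred_eq, List.length_append]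
  constructor
  · rintro ⟨hx, hdig⟩
    refine ⟨⟨hx, fun i hi => ?_⟩, iterate_Tb_mem_Ico β hx w.length, fun i hi => ?_⟩
    · simpa [List.getElem_append_left hi] using hdig i (by omega)
    · simpa [dig_add] using hdig (w.length + i) (by omega)
  · rintro ⟨⟨hx, hdig⟩, -, hdig'⟩
    refine ⟨hx, fun i hi => ?_⟩
    rcases lt_or_ge i w.length with hiw | hiw
    · rw [List.getElem_append_left hiw, hdig i hiw]
    · obtain ⟨j, rfl⟩ := Nat.exists_eq_add_of_le hiw
      rw [List.getElem_append_right hiw, dig_add]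
      simpa using hdig' j (by omega)

lemma Full.append {β : ℝ} {w w' : List ℕ} (hw : Full β w) (hw' : Full β w') :
    Full β (w ++ w') := by
  rw [Full, List.length_append, Nat.add_comm, Function.iterate_add, Set.image_comp,
    cyl_append, Set.image_inter_preimage, hw,
    Set.inter_eq_self_of_subset_right (cyl_subset_Ico β w'), hw']

lemma Full.adm {β : ℝ} {w : List ℕ} (hw : Full β w) : Adm β w := by
  have h0 : (0 : ℝ) ∈ (Tb β)^[w.length] '' cyl β w := hw ▸ Set.left_mem_Ico.2 one_pos
  obtain ⟨x, hx, -⟩ := h0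
  exact ⟨x, hx⟩

theorem stmt2_general (β : ℝ) (w w' : List ℕ)
    (f1 : Full β w) (f2 : Full β w') :
    Adm β (w ++ w') ∧ Full β (w ++ w') :=
  ⟨(f1.append f2).adm, f1.append f2⟩

/-- the concatenation of two full words is full (and admissible). -/
theorem stmt2 (β : ℝ) (hβ : 1 < β) (w w' : List ℕ)
    (h1 : Adm β w) (h2 : Adm β w') (f1 : Full β w) (f2 : Full β w') :
    Adm β (w ++ w') ∧ Full β (w ++ w') :=
  stmt2_general β w w' f1 f2
end

section
/- Let β > 1. If ε(1,β) is infinite, then τ_β(s) ≤ r_s(β) + 1 for every s ≥ 1. If ε(1,β) is finite with length M, then τ_β(s) ≤ r_s(β) + 1 for every 1 ≤ s ≤ M. -/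
/-!
The greedy algorithm first subtracts `g`, the largest nonzero position `≤ s`; the digits at
positions `g+1, …, s` of `ε(1,β)` then vanish, and they agree with those of `ε*(1,β)` (in the
finite case because `s ≤ M` and `ε_M ≠ 0`). So `s - g ≤ r_s(β)`, and since every greedy step
lowers the remainder by at least one, the rest of the representation has at most `s - g` terms.
-/

section

variable {β : ℝ}

theorem FiniteLen.unique {M N : ℕ} (hM : FiniteLen β M) (hN : FiniteLen β N) : M = N := by
  by_contra hne
  rcases Nat.lt_or_gt_of_ne hne with h | h
  · exact hN.2.1 (hM.2.2 (N - 1) (by omega))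
  · exact hM.2.1 (hN.2.2 (M - 1) (by omega))

theorem modExp_of_not_finiteLen (h : ¬ ∃ M, FiniteLen β M) (i : ℕ) :
    modExp β i = dig β 1 i := by
  rw [modExp, dif_neg h]

theorem FiniteLen.modExp_eq_dig {M i : ℕ} (hM : FiniteLen β M) (hi : i + 1 < M) :
    modExp β i = dig β 1 i := by
  classical
  have hex : ∃ M, FiniteLen β M := ⟨M, hM⟩
  have hfind : Nat.find hex = M := (Nat.find_spec hex).unique hM
  rw [modExp, dif_pos hex, hfind, Nat.mod_eq_of_lt hi, if_neg (by omega),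
    Nat.mod_eq_of_lt (by omega)]

theorem dig_one_eq_zero_of_greedyStep_le {s j : ℕ} (hgj : greedyStep β s ≤ j) (hjs : j < s) :
    dig β 1 j = 0 := by
  by_contra hne
  exact Nat.findGreatest_is_greatest (Nat.lt_succ_of_le hgj) hjs ⟨by omega, by simpa using hne⟩

theorem greedyStep_eq_self {s : ℕ} (hs : 1 ≤ s) (h : dig β 1 (s - 1) ≠ 0) :
    greedyStep β s = s :=
  Nat.findGreatest_eq ⟨hs, h⟩

theorem tau_le_self (s : ℕ) : tau β s ≤ s := by
  induction s using Nat.strong_induction_on with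
  | _ s ih =>
    match s with
    | 0 => simp [tau]
    | t + 1 =>
      rw [tau]
      have := ih (t - (greedyStep β (t + 1) - 1)) (by omega)
      omega

theorem tau_le_sub_greedyStep_add_one {s : ℕ} (hs : 1 ≤ s) :
    tau β s ≤ s - greedyStep β s + 1 := by
  obtain ⟨t, rfl⟩ : ∃ t, s = t + 1 := ⟨s - 1, by omega⟩
  rw [tau]
  have := tau_le_self (β := β) (t - (greedyStep β (t + 1) - 1))
  omega

theorem le_rrun_of_modExp_eq_zero {s i k : ℕ} (hiks : i + k ≤ s)
    (hzero : ∀ t < k, modExp β (i + t) = 0) : k ≤ rrun β s := by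
  classical
  rcases Nat.eq_zero_or_pos k with rfl | hk
  · exact Nat.zero_le _
  · exact Nat.le_findGreatest (by omega) ⟨hk, i, hiks, hzero⟩

theorem tau_le_rrun_add_one {s : ℕ} (hs : 1 ≤ s)
    (hzero : ∀ j, greedyStep β s ≤ j → j < s → modExp β j = 0) :
    tau β s ≤ rrun β s + 1 := by
  have hgs : greedyStep β s ≤ s := Nat.findGreatest_le s
  have hrun : s - greedyStep β s ≤ rrun β s :=
    le_rrun_of_modExp_eq_zero (i := greedyStep β s) (by omega) fun t ht =>
      hzero _ (by omega) (by omega)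
  have := tau_le_sub_greedyStep_add_one (β := β) hs
  omega

end

theorem stmt14_general (β : ℝ) :
    ((¬ ∃ M, FiniteLen β M) → ∀ s, 1 ≤ s → tau β s ≤ rrun β s + 1) ∧
    (∀ M, FiniteLen β M → ∀ s, 1 ≤ s → s ≤ M → tau β s ≤ rrun β s + 1) := by
  refine ⟨fun hinf s hs => tau_le_rrun_add_one hs fun j hgj hjs => ?_,
    fun M hM s hs hsM => tau_le_rrun_add_one hs fun j hgj hjs => ?_⟩
  · rw [modExp_of_not_finiteLen hinf]
    exact dig_one_eq_zero_of_greedyStep_le hgj hjs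
  · have hsM' : s ≠ M := by
      rintro rfl
      have := greedyStep_eq_self hM.1 hM.2.1
      omega
    rw [hM.modExp_eq_dig (by omega)]
    exact dig_one_eq_zero_of_greedyStep_le hgj hjs

/-- τ_β(s) ≤ r_s(β) + 1 (for all s ≥ 1 in the infinite case,
and for 1 ≤ s ≤ M in the finite case). -/
theorem stmt14 (β : ℝ) (hβ : 1 < β) :
    ((¬ ∃ M, FiniteLen β M) → ∀ s, 1 ≤ s → tau β s ≤ rrun β s + 1) ∧
    (∀ M, FiniteLen β M → ∀ s, 1 ≤ s → s ≤ M → tau β s ≤ rrun β s + 1) :=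
  stmt14_general β
end
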